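/- Let f : ℝⁿ → ℝ with lower bound f_low and c : ℝⁿ → ℝᵐ, ε₀ > 0, β₀ ≥ 1, α > 1, β_k = α^k β₀, and Q_β(x) = f(x) + (β/2)‖c(x)‖². Suppose x₀ satisfies ‖c(x₀)‖ ≤ ε₀/√2 and a sequence (x_k) satisfies Q_{β_k}(x_{k+1}) ≤ Q_{β_k}(x₀) for each k. If ‖c(x_k)‖ > ε₀ for k = 1,...,T-1 with T ≥ 2, then β_{T-2} < 4(f(x₀) - f_low) ε₀⁻². -/

import Mathlib

/-!
At the penalty parameter `β = β_{T-2}` the iterate `x_{T-1}` does not increase the penalty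
function `Q_β` over `x₀`, so `β/2 (‖c x_{T-1}‖² - ‖c x₀‖²) ≤ f x₀ - f x_{T-1} ≤ f x₀ - f_low`.
The infeasibility gap on the left exceeds `ε₀² - ε₀²/2 = ε₀²/2`, hence `β ε₀²/4 < f x₀ - f_low`.
-/

/-- The paper's `Q_β`. -/
noncomputable def quadPenalty {X E : Type*} [Norm E] (f : X → ℝ) (c : X → E) (β : ℝ) (x : X) : ℝ :=
  f x + β / 2 * ‖c x‖ ^ 2

lemma sq_le_half_sq_of_le_div_sqrt_two {r ε : ℝ} (hr : 0 ≤ r) (h : r ≤ ε / √2) :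
    r ^ 2 ≤ ε ^ 2 / 2 := by
  simpa only [div_pow, Real.sq_sqrt zero_le_two] using pow_le_pow_left₀ hr h 2

theorem lt_of_quadPenalty_le_of_infeasible {X E : Type*} [Norm E] {f : X → ℝ} {c : X → E}
    {flow ε β : ℝ} {x₀ y : X} (hε : 0 < ε) (hβ : 0 < β) (hflow : flow ≤ f y)
    (hx₀ : ‖c x₀‖ ^ 2 ≤ ε ^ 2 / 2) (hy : ε < ‖c y‖)
    (hdec : quadPenalty f c β y ≤ quadPenalty f c β x₀) :
    β < 4 * (f x₀ - flow) * ε⁻¹ ^ 2 := by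
  unfold quadPenalty at hdec
  have hgap : ε ^ 2 < ‖c y‖ ^ 2 := pow_lt_pow_left₀ hy hε.le two_ne_zero
  have hkey : β * ε ^ 2 < 4 * (f x₀ - flow) := by nlinarith
  rw [inv_pow, ← div_eq_mul_inv, lt_div_iff₀ (by positivity)]
  exact hkey

/-- Classical penalty-parameter bound without the PL condition: if the iterates
remain infeasible beyond tolerance `ε₀` for `k = 1,…,T-1`, then
`β_{T-2} = α^{T-2} β₀ < 4 (f(x₀) - f_low) ε₀⁻²`. -/
theorem stmt_11 (n m : ℕ)
    (f : EuclideanSpace ℝ (Fin n) → ℝ)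
    (c : EuclideanSpace ℝ (Fin n) → EuclideanSpace ℝ (Fin m))
    (flow : ℝ) (hflow : ∀ x, flow ≤ f x)
    (ε₀ α β₀ : ℝ) (hε₀ : 0 < ε₀) (hα : 1 < α) (hβ₀ : 1 ≤ β₀)
    (x : ℕ → EuclideanSpace ℝ (Fin n))
    (hx₀ : ‖c (x 0)‖ ≤ ε₀ / Real.sqrt 2)
    (hdec : ∀ k : ℕ,
      f (x (k + 1)) + α ^ k * β₀ / 2 * ‖c (x (k + 1))‖ ^ 2
        ≤ f (x 0) + α ^ k * β₀ / 2 * ‖c (x 0)‖ ^ 2)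
    (T : ℕ) (hT : 2 ≤ T)
    (hinfeas : ∀ k : ℕ, 1 ≤ k → k ≤ T - 1 → ε₀ < ‖c (x k)‖) :
    α ^ (T - 2) * β₀ < 4 * (f (x 0) - flow) * ε₀⁻¹ ^ 2 := by
  obtain ⟨k, rfl⟩ : ∃ k, T = k + 2 := ⟨T - 2, by omega⟩
  have hβ : 0 < α ^ k * β₀ := by
    have : 0 < α := by linarith
    positivity
  simpa using lt_of_quadPenalty_le_of_infeasible (c := c) hε₀ hβ (hflow (x (k + 1)))
    (sq_le_half_sq_of_le_div_sqrt_two (norm_nonneg _) hx₀)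
    (hinfeas (k + 1) (by omega) (by omega)) (hdec k)
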